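/- For all nonnegative integers m and n and any x, the fully degenerate Bell polynomials satisfy Bel_{n+m,λ}(x) = Σ_{k=0}^m Σ_{l=0}^n (1)_{k,λ} {m brace k}_λ C(n,l) x^k F_{n−l,λ}^{(k)}(−λx, k−mλ) Bel_{l,λ}(x). -/

import Mathlib

open PowerSeries

/-- The degenerate falling factorial `(x)_{n,λ}`. -/
def degFall (lam x : ℝ) (n : ℕ) : ℝ := ∏ i ∈ Finset.range n, (x - i * lam)

/-- The ordinary falling factorial `(x)_k`. -/
def fallF (x : ℝ) (k : ℕ) : ℝ := ∏ i ∈ Finset.range k, (x - i)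

/-- The degenerate exponential `e_λ^y(t) = Σ_{m≥0} (y)_{m,λ} t^m/m!`. -/
noncomputable def degExpP (lam y : ℝ) : PowerSeries ℝ :=
  PowerSeries.mk fun m => degFall lam y m / (Nat.factorial m)

/-- The two-variable degenerate Fubini polynomials of order `k ∈ ℕ`, defined by
`(1/(1 − u(e_λ(t) − 1)))^k e_λ^y(t) = Σ_j F_{j,λ}^{(k)}(u,y) t^j/j!`. -/
noncomputable def degFubiniOrd (lam : ℝ) (k : ℕ) (u y : ℝ) (j : ℕ) : ℝ :=
  (Nat.factorial j : ℝ) * PowerSeries.coeff j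
    (((1 - PowerSeries.C u * (degExpP lam 1 - 1))⁻¹) ^ k * degExpP lam y)

/-!
Write `P = e_λ(t) − 1`, `B = e_λ(xP)` and `G = 1/(1 + λxP)`. The chain rule and the identity
`e_λ(s) = (1 + λs) e_λ^{1−λ}(s)` give `B' = x e_λ^{1−λ} G B`, and then
`(G^k e_λ^{k−mλ} B)' = (k − mλ) G^k e_λ^{k−(m+1)λ} B + x(1 − kλ) G^{k+1} e_λ^{k+1−(m+1)λ} B`.
The recurrence `{m+1 brace k}_λ = {m brace k−1}_λ + (k − mλ){m brace k}_λ` therefore gives, by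
induction on `m`, `B^{(m)} = Σ_k (1)_{k,λ} {m brace k}_λ x^k G^k e_λ^{k−mλ} B`. The `t^n`
coefficient of `B^{(m)}` is `Bel_{n+m,λ}(x) / n!`, and on the right it is a binomial convolution of
the Fubini polynomials with the Bell polynomials.
-/

open Finset

lemma degFall_succ (lam z : ℝ) (n : ℕ) : degFall lam z (n + 1) = degFall lam z n * (z - n * lam) :=
  prod_range_succ _ _

lemma degFall_succ' (lam z : ℝ) (n : ℕ) : degFall lam z (n + 1) = z * degFall lam (z - lam) n := by
  simp only [degFall, prod_range_succ', Nat.cast_add, Nat.cast_one, CharP.cast_eq_zero, zero_mul,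
    sub_zero]
  rw [mul_comm]
  congr 1
  exact prod_congr rfl fun i _ => by ring

lemma degFall_zero_right (lam z : ℝ) : degFall lam z 0 = 1 := prod_range_zero _

lemma degFall_add (lam a b : ℝ) (n : ℕ) :
    degFall lam (a + b) n =
      ∑ ij ∈ antidiagonal n, (n.choose ij.1 : ℝ) * degFall lam a ij.1 * degFall lam b ij.2 := by
  induction n with
  | zero => simp [degFall_zero_right]
  | succ n ih =>
    simp only [mul_assoc]
    rw [sum_antidiagonal_choose_succ_mul (fun i j => degFall lam a i * degFall lam b j),
      degFall_succ, ih, sum_mul, ← sum_add_distrib]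
    refine sum_congr rfl fun ij hij => ?_
    rw [HasAntidiagonal.mem_antidiagonal] at hij
    rw [Nat.choose_symm_of_eq_add hij.symm, degFall_succ, degFall_succ, ← hij]
    push_cast
    ring

lemma degFall_zero_left (lam : ℝ) (n : ℕ) : degFall lam 0 (n + 1) = 0 := by
  rw [degFall_succ', zero_mul]

lemma fallF_succ (z : ℝ) (k : ℕ) : fallF z (k + 1) = fallF z k * (z - k) :=
  prod_range_succ _ _

lemma fallF_natCast (z k : ℕ) : fallF z k = z.descFactorial k := by
  rw [fallF, ← descPochhammer_eval_eq_prod_range, descPochhammer_eval_eq_descFactorial]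

lemma eq_of_forall_natCast_sum_fallF_eq {N : ℕ} {a b : ℕ → ℝ}
    (h : ∀ z : ℕ, ∑ k ∈ range N, a k * fallF z k = ∑ k ∈ range N, b k * fallF z k) :
    ∀ k < N, a k = b k := by
  intro k
  induction k using Nat.strong_induction_on with
  | _ k ih =>
    intro hk
    have hz : ∑ j ∈ range N, (a j - b j) * (k.descFactorial j : ℝ) = 0 := by
      simp only [sub_mul, sum_sub_distrib, ← fallF_natCast, h, sub_self]
    rw [sum_eq_single_of_mem k (mem_range.mpr hk), Nat.descFactorial_self, mul_eq_zero,
      sub_eq_zero] at hz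
    · exact hz.resolve_right (Nat.cast_ne_zero.mpr k.factorial_ne_zero)
    · intro j hj hjk
      rcases hjk.lt_or_gt with hlt | hgt
      · rw [ih j hlt (hlt.trans hk), sub_self, zero_mul]
      · rw [Nat.descFactorial_eq_zero_iff_lt.mpr hgt, Nat.cast_zero, mul_zero]

lemma sum_range_succ_shift_add_smul {R M : Type*} [Semiring R] [AddCommMonoid M] [Module R M]
    (c d : ℕ → R) (f : ℕ → M) (m : ℕ) :
    ∑ k ∈ range (m + 2), ((if k = 0 then 0 else c (k - 1)) + (if k ≤ m then d k else 0)) • f k =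
      ∑ k ∈ range (m + 1), (c k • f (k + 1) + d k • f k) := by
  simp only [add_smul, sum_add_distrib]
  rw [sum_range_succ' (fun k => (if k = 0 then 0 else c (k - 1)) • f k),
    sum_range_succ (fun k => (if k ≤ m then d k else 0) • f k)]
  simp only [↓reduceIte, zero_smul, Nat.add_sub_cancel, Nat.add_one_ne_zero, add_zero,
    show ¬m + 1 ≤ m by omega]
  congr 1
  exact sum_congr rfl fun k hk => by rw [if_pos (Nat.lt_succ_iff.mp (mem_range.mp hk))]

lemma coeff_degExpP (lam y : ℝ) (p : ℕ) :
    coeff p (degExpP lam y) = degFall lam y p / p.factorial :=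
  coeff_mk _ _

lemma degExpP_add (lam a b : ℝ) : degExpP lam (a + b) = degExpP lam a * degExpP lam b := by
  ext p
  rw [coeff_mul, coeff_degExpP, degFall_add, sum_div]
  refine sum_congr rfl fun ij hij => ?_
  rw [HasAntidiagonal.mem_antidiagonal] at hij
  rw [coeff_degExpP, coeff_degExpP, ← hij, Nat.cast_add_choose]
  field_simp

lemma degExpP_zero (lam : ℝ) : degExpP lam 0 = 1 := by
  ext (_ | p)
  · simp [coeff_degExpP, degFall_zero_right]
  · simp [coeff_degExpP, degFall_zero_left, coeff_one]

lemma degExpP_natCast (lam : ℝ) (n : ℕ) : degExpP lam n = degExpP lam 1 ^ n := by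
  induction n with
  | zero => simpa using degExpP_zero lam
  | succ n ih => rw [Nat.cast_succ, degExpP_add, ih, pow_succ]

lemma degExpP_self (lam : ℝ) : degExpP lam lam = 1 + C lam * X := by
  ext (_ | _ | p)
  · simp [coeff_degExpP, degFall_zero_right]
  · simp [coeff_degExpP, degFall_succ', degFall_zero_right]
  · simp [coeff_degExpP, degFall_succ', coeff_one]

lemma derivative_degExpP (lam y : ℝ) : d⁄dX ℝ (degExpP lam y) = y • degExpP lam (y - lam) := by
  ext p
  rw [coeff_derivative, coeff_smul, smul_eq_mul, coeff_degExpP, coeff_degExpP, degFall_succ',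
    Nat.factorial_succ]
  push_cast
  field_simp

lemma constantCoeff_degExpP_sub_one (lam : ℝ) : constantCoeff (degExpP lam 1 - 1) = 0 := by
  rw [map_sub, ← coeff_zero_eq_constantCoeff_apply, coeff_degExpP, degFall_zero_right]
  simp

lemma coeff_degExpP_sub_one_pow_of_lt (lam : ℝ) {p k : ℕ} (h : p < k) :
    coeff p ((degExpP lam 1 - 1) ^ k) = 0 :=
  coeff_of_lt_order _ <| (Nat.cast_lt.mpr h).trans_le <|
    le_order_pow_of_constantCoeff_eq_zero k (constantCoeff_degExpP_sub_one lam)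

lemma derivative_degExpP_sub_one (lam : ℝ) :
    d⁄dX ℝ (degExpP lam 1 - 1) = degExpP lam (1 - lam) := by
  rw [map_sub, derivative_one, sub_zero, derivative_degExpP, one_smul]

noncomputable def fubiniGF (lam u : ℝ) : ℝ⟦X⟧ := (1 - C u * (degExpP lam 1 - 1))⁻¹

noncomputable def bellGF (lam x : ℝ) : ℝ⟦X⟧ := (degExpP lam 1).subst (x • (degExpP lam 1 - 1))

lemma derivative_fubiniGF (lam u : ℝ) :
    d⁄dX ℝ (fubiniGF lam u) = u • degExpP lam (1 - lam) * fubiniGF lam u ^ 2 := by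
  rw [fubiniGF, derivative_inv', map_sub, derivative_one, Derivation.leibniz, derivative_C,
    derivative_degExpP_sub_one, smul_zero, add_zero, smul_eq_mul, smul_eq_C_mul]
  ring

lemma derivative_fubiniGF_pow (lam u : ℝ) (k : ℕ) :
    d⁄dX ℝ (fubiniGF lam u ^ k) = (k * u) • degExpP lam (1 - lam) * fubiniGF lam u ^ (k + 1) := by
  rcases k with _ | k
  · simp
  · rw [derivative_pow, derivative_fubiniGF, smul_eq_C_mul, smul_eq_C_mul, map_mul, map_natCast,
      Nat.add_sub_cancel]
    ring

lemma hasSubst_smul_degExpP_sub_one (lam x : ℝ) : HasSubst (x • (degExpP lam 1 - 1)) :=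
  HasSubst.of_constantCoeff_zero' <| by
    rw [smul_eq_C_mul, map_mul, constantCoeff_degExpP_sub_one, mul_zero]

lemma derivative_bellGF (lam x : ℝ) :
    d⁄dX ℝ (bellGF lam x) =
      x • degExpP lam (1 - lam) * (fubiniGF lam (-lam * x) * bellGF lam x) := by
  have hg := hasSubst_smul_degExpP_sub_one lam x
  set g := x • (degExpP lam 1 - 1)
  have hsplit : bellGF lam x = (1 + lam • g) * (degExpP lam (1 - lam)).subst g := by
    have he : degExpP lam 1 = (1 + C lam * X) * degExpP lam (1 - lam) := by
      rw [← degExpP_self, ← degExpP_add, add_sub_cancel]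
    show (degExpP lam 1).subst g = _
    rw [he, subst_mul hg, ← smul_eq_C_mul, ← coe_substAlgHom hg, map_add, map_one, map_smul,
      coe_substAlgHom hg, subst_X hg]
  have hinv : fubiniGF lam (-lam * x) * (1 + lam • g) = 1 := by
    have hg' : 1 + lam • g = 1 - C (-lam * x) * (degExpP lam 1 - 1) := by
      simp only [g, smul_eq_C_mul, map_mul, map_neg]
      ring
    rw [hg', fubiniGF]
    exact PowerSeries.inv_mul_cancel _ (by simp [constantCoeff_degExpP_sub_one])
  rw [bellGF, derivative_subst hg, ← bellGF, hsplit, derivative_degExpP, one_smul,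
    Derivation.map_smul, derivative_degExpP_sub_one]
  linear_combination (-(x • degExpP lam (1 - lam) * subst g (degExpP lam (1 - lam)))) * hinv

noncomputable def bellDerivTerm (lam x : ℝ) (m k : ℕ) : ℝ⟦X⟧ :=
  (degFall lam 1 k * x ^ k) •
    (fubiniGF lam (-lam * x) ^ k * degExpP lam (k - m * lam) * bellGF lam x)

lemma derivative_bellDerivTerm (lam x : ℝ) (m k : ℕ) :
    d⁄dX ℝ (bellDerivTerm lam x m k) =
      ((k : ℝ) - m * lam) • bellDerivTerm lam x (m + 1) k +
        bellDerivTerm lam x (m + 1) (k + 1) := by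
  simp only [bellDerivTerm, Derivation.map_smul, Derivation.leibniz, derivative_fubiniGF_pow,
    derivative_degExpP, derivative_bellGF, degFall_succ]
  push_cast
  rw [show (k : ℝ) + 1 - (m + 1) * lam = (1 - lam) + (k - m * lam) by ring, degExpP_add,
    show (k : ℝ) - m * lam - lam = k - (m + 1) * lam by ring]
  simp only [smul_eq_C_mul, map_mul, map_sub, map_neg, map_pow, map_natCast, map_one]
  ring

lemma factorial_mul_coeff_mul (f g : ℝ⟦X⟧) (n : ℕ) :
    n.factorial * coeff n (f * g) = ∑ l ∈ range (n + 1),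
      n.choose l * ((n - l).factorial * coeff (n - l) f) * (l.factorial * coeff l g) := by
  rw [coeff_mul, Nat.sum_antidiagonal_eq_sum_range_succ (fun i j => coeff i f * coeff j g), mul_sum]
  rw [← sum_range_reflect]
  refine sum_congr rfl fun l hl => ?_
  have hl : l ≤ n := Nat.lt_succ_iff.mp (mem_range.mp hl)
  rw [Nat.cast_choose ℝ hl, show n + 1 - 1 - l = n - l by omega, Nat.sub_sub_self hl]
  field_simp

section DegenerateStirling

variable {lam : ℝ} {S : ℕ → ℕ → ℝ}
  (hS : ∀ (n : ℕ) (z : ℝ), degFall lam z n = ∑ k ∈ range (n + 1), S n k * fallF z k)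
include hS

lemma coeff_degExpP_sub_one_pow {p k : ℕ} (hk : k ≤ p) :
    coeff p ((degExpP lam 1 - 1) ^ k) = S p k * k.factorial / p.factorial := by
  set c : ℕ → ℝ := fun j => coeff p ((degExpP lam 1 - 1) ^ j)
  -- For natural `z`, expanding `e_λ^z = (1 + P)^z` writes `(z)_{p,λ}` in the basis `(z)_j`.
  have hbinom (z : ℕ) : degFall lam z p / p.factorial = ∑ j ∈ range (p + 1), c j * z.choose j := by
    have hext {M : ℕ} (hM : M ≤ p + z + 1) (h0 : ∀ j, M ≤ j → c j * z.choose j = 0) :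
        ∑ j ∈ range M, c j * z.choose j = ∑ j ∈ range (p + z + 1), c j * z.choose j :=
      sum_subset (range_subset_range.mpr hM) fun j _ hj => h0 j (by simpa using hj)
    have hpow : degFall lam z p / p.factorial = ∑ j ∈ range (z + 1), c j * z.choose j := by
      rw [← coeff_degExpP, degExpP_natCast, ← sub_add_cancel (degExpP lam 1) 1, add_pow, map_sum]
      refine sum_congr rfl fun j _ => ?_
      rw [one_pow, mul_one, ← map_natCast (C (R := ℝ)), coeff_mul_C]
    rw [hpow, hext (by omega), hext (M := p + 1) (by omega)]
    · exact fun j hj => mul_eq_zero_of_left (coeff_degExpP_sub_one_pow_of_lt lam (by omega)) _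
    · intro j hj
      rw [Nat.choose_eq_zero_of_lt (by omega), Nat.cast_zero, mul_zero]
  have hS_eq := eq_of_forall_natCast_sum_fallF_eq (N := p + 1) (a := S p)
    (b := fun j => p.factorial / j.factorial * c j) (fun z => ?_) k (by omega)
  · show c k = _
    rw [hS_eq]
    field_simp
  · rw [← hS, ← div_mul_cancel₀ (degFall lam z p) (Nat.cast_ne_zero.mpr p.factorial_ne_zero),
      hbinom, sum_mul]
    refine sum_congr rfl fun j _ => ?_
    rw [fallF_natCast, Nat.descFactorial_eq_factorial_mul_choose]
    push_cast
    field_simp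

lemma sum_stirling_succ_smul {M : Type*} [AddCommMonoid M] [Module ℝ M] (m : ℕ) (f : ℕ → M) :
    ∑ k ∈ range (m + 2), S (m + 1) k • f k =
      ∑ k ∈ range (m + 1), S m k • (((k : ℝ) - m * lam) • f k + f (k + 1)) := by
  have hrec := eq_of_forall_natCast_sum_fallF_eq (N := m + 2) (a := S (m + 1))
    (b := fun k => (if k = 0 then 0 else S m (k - 1)) +
      (if k ≤ m then ((k : ℝ) - m * lam) * S m k else 0)) fun z => by
    have hshift := sum_range_succ_shift_add_smul (S m) (fun k => ((k : ℝ) - m * lam) * S m k)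
      (fallF z) m
    simp only [smul_eq_mul] at hshift
    rw [hshift, ← hS, degFall_succ, hS, sum_mul]
    refine sum_congr rfl fun k _ => ?_
    rw [fallF_succ]
    ring
  rw [sum_congr rfl fun k hk => by rw [hrec k (mem_range.mp hk)], sum_range_succ_shift_add_smul]
  refine sum_congr rfl fun k _ => ?_
  rw [smul_add, smul_smul, mul_comm]
  abel

lemma coeff_bellGF (x : ℝ) (p : ℕ) :
    coeff p (bellGF lam x) =
      (∑ j ∈ range (p + 1), S p j * degFall lam 1 j * x ^ j) / p.factorial := by
  have hterm (j : ℕ) : coeff j (degExpP lam 1) • coeff p ((x • (degExpP lam 1 - 1)) ^ j) =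
      if j ≤ p then S p j * degFall lam 1 j * x ^ j / p.factorial else 0 := by
    rw [smul_pow, coeff_smul, coeff_degExpP, smul_eq_mul, smul_eq_mul]
    split_ifs with hj
    · rw [coeff_degExpP_sub_one_pow hS hj]
      field_simp
    · rw [coeff_degExpP_sub_one_pow_of_lt lam (by omega), mul_zero, mul_zero]
  rw [bellGF, coeff_subst' (hasSubst_smul_degExpP_sub_one lam x), finsum_congr hterm,
    finsum_eq_sum_of_support_subset (s := range (p + 1)), sum_div]
  · exact sum_congr rfl fun j hj => if_pos (Nat.lt_succ_iff.mp (mem_range.mp hj))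
  · intro j hj
    simp only [Function.mem_support, ne_eq, ite_eq_right_iff, Classical.not_imp] at hj
    simpa [Nat.lt_succ_iff] using hj.1

lemma iterate_derivative_bellGF (x : ℝ) (m : ℕ) :
    (d⁄dX ℝ)^[m] (bellGF lam x) = ∑ k ∈ range (m + 1), S m k • bellDerivTerm lam x m k := by
  induction m with
  | zero =>
    have hS00 : S 0 0 = 1 := by simpa [degFall_zero_right, fallF] using (hS 0 0).symm
    simp [bellDerivTerm, hS00, degFall_zero_right, degExpP_zero]
  | succ m ih =>
    rw [Function.iterate_succ_apply', ih, map_sum, sum_stirling_succ_smul hS]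
    simp only [Derivation.map_smul, derivative_bellDerivTerm]

end DegenerateStirling

/-- Spivey-type recurrence for the fully degenerate Bell polynomials
`Bel_{n,λ}(x) = Σ_{k=0}^n {n brace k}_λ (1)_{k,λ} x^k`:
`Bel_{n+m,λ}(x) = Σ_{k=0}^m Σ_{l=0}^n (1)_{k,λ} {m brace k}_λ C(n,l) x^k
F_{n−l,λ}^{(k)}(−λx, k−mλ) Bel_{l,λ}(x)`, where `S n k = {n brace k}_λ` is
defined by `(x)_{n,λ} = Σ_k S n k (x)_k`. -/
theorem stmt10 (lam x : ℝ) (S : ℕ → ℕ → ℝ)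
    (hS : ∀ (n : ℕ) (z : ℝ),
      degFall lam z n = ∑ k ∈ Finset.range (n + 1), S n k * fallF z k)
    (n m : ℕ) :
    (∑ j ∈ Finset.range (n + m + 1), S (n + m) j * degFall lam 1 j * x ^ j) =
      ∑ k ∈ Finset.range (m + 1), ∑ l ∈ Finset.range (n + 1),
        degFall lam 1 k * S m k * (n.choose l : ℝ) * x ^ k *
          degFubiniOrd lam k (-lam * x) ((k : ℝ) - m * lam) (n - l) *
          (∑ j ∈ Finset.range (l + 1), S l j * degFall lam 1 j * x ^ j) := by
  have hBel (p : ℕ) :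
      ∑ j ∈ range (p + 1), S p j * degFall lam 1 j * x ^ j =
        p.factorial * coeff p (bellGF lam x) := by
    rw [coeff_bellGF hS]
    field_simp
  have hshift : ((n + m).factorial : ℝ) * coeff (n + m) (bellGF lam x) =
      n.factorial * coeff n ((d⁄dX ℝ)^[m] (bellGF lam x)) := by
    rw [coeff_iterate_derivative, ← Nat.factorial_mul_ascFactorial]
    push_cast
    ring
  rw [hBel, hshift, iterate_derivative_bellGF hS, map_sum, mul_sum]
  refine sum_congr rfl fun k _ => ?_
  rw [coeff_smul, bellDerivTerm, coeff_smul, smul_eq_mul, smul_eq_mul,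
    mul_left_comm (n.factorial : ℝ), mul_left_comm (n.factorial : ℝ), factorial_mul_coeff_mul,
    mul_sum, mul_sum]
  refine sum_congr rfl fun l _ => ?_
  rw [hBel l, degFubiniOrd, ← fubiniGF]
  ring
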